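/- arXiv:1410.6950 — 3 statements merged into one kernel-verified Lean document; each statement's English description precedes it below -/
import Mathlib

section
/- Let φ : M_n(ℂ) → A be a linear map into a C*-algebra A. Then φ is completely positive if and only if the Choi matrix (φ(Eᵢⱼ))ᵢⱼ ∈ M_n(A) is positive. -/
/-!
If `φ` is completely positive, apply it to the positive matrix `(Eᵢⱼ)ᵢⱼ = ωω*`, where
`ω = ∑ᵢ eᵢ ⊗ eᵢ`: the result is the Choi matrix. Conversely, a factorisation `Wᴴ * W` of
the Choi matrix puts `φ` in the form `φ(M) = ∑ₗ wₗ* M wₗ`, with `wₗ` the rows of `W`. For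
a positive `X = Sᴴ * S ∈ M_k(M_n(ℂ))` this writes `φ_k(X)` as `Vᴴ * V` for a rectangular
matrix `V` over `A`, and `Vᴴ * V` is a sum of squares `yᴴ * y` in the C⋆-algebra
`M_k(A)`, hence positive, hence a single square.
-/

open scoped ComplexOrder Matrix

lemma CStarAlgebra.exists_sum_star_mul_self_eq {B : Type*} [CStarAlgebra B] [PartialOrder B]
    [StarOrderedRing B] {ι : Type*} [Fintype ι] (f : ι → B) :
    ∃ y : B, ∑ r, star (f r) * f r = star y * y :=
  CStarAlgebra.nonneg_iff_eq_star_mul_self.mp <|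
    Finset.sum_nonneg fun r _ => star_mul_self_nonneg (f r)

namespace Matrix

lemma exists_conjTranspose_mul_self_eq {A : Type*} [CStarAlgebra A] [PartialOrder A]
    [StarOrderedRing A] {l m : Type*} [Fintype l] [Fintype m] [DecidableEq m]
    (V : Matrix l m A) : ∃ Y : Matrix m m A, Vᴴ * V = Yᴴ * Y := by
  cases isEmpty_or_nonempty m
  · exact ⟨0, Subsingleton.elim _ _⟩
  obtain ⟨i₀⟩ := ‹Nonempty m›
  -- Each row of `V` becomes the only nonzero row of a square matrix.
  have hrows : Vᴴ * V = ∑ p, (updateRow 0 i₀ (V p))ᴴ * updateRow 0 i₀ (V p) := by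
    ext s t
    simp [mul_apply, sum_apply, updateRow_apply]
  obtain ⟨Y, hY⟩ := CStarAlgebra.exists_sum_star_mul_self_eq fun p =>
    CStarMatrix.ofMatrix (updateRow 0 i₀ (V p))
  exact ⟨CStarMatrix.ofMatrix.symm Y, hrows.trans hY⟩

open scoped MatrixOrder in
lemma PosSemidef.exists_eq_conjTranspose_mul_self {𝕜 n : Type*} [RCLike 𝕜] [Fintype n]
    [DecidableEq n] {M : Matrix n n 𝕜} (hM : M.PosSemidef) : ∃ S : Matrix n n 𝕜, M = Sᴴ * S :=
  CStarAlgebra.nonneg_iff_eq_star_mul_self.mp hM.nonneg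

lemma posSemidef_comp_single_one {R n : Type*} [CommRing R] [PartialOrder R] [StarRing R]
    [StarOrderedRing R] [Fintype n] [DecidableEq n] :
    (comp n n n n R (of fun i j => single i j 1)).PosSemidef := by
  convert posSemidef_vecMulVec_self_star fun p : n × n => if p.1 = p.2 then (1 : R) else 0
    using 1
  ext ⟨i, k⟩ ⟨j, l⟩
  simp only [comp_apply, of_apply, vecMulVec_apply, single_apply, Pi.star_apply]
  split_ifs <;> simp_all

end Matrix

def choiMatrix {R A n : Type*} [Semiring R] [AddCommMonoid A] [Module R A] [DecidableEq n]
    (φ : Matrix n n R →ₗ[R] A) : Matrix n n A :=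
  Matrix.of fun i j => φ (Matrix.single i j 1)

namespace LinearMap

lemma apply_eq_sum_smul_choiMatrix {R A n : Type*} [CommSemiring R] [AddCommMonoid A]
    [Module R A] [Fintype n] [DecidableEq n] (φ : Matrix n n R →ₗ[R] A) (M : Matrix n n R) :
    φ M = ∑ i, ∑ j, M i j • choiMatrix φ i j := by
  conv_lhs => rw [M.matrix_eq_sum_single]
  simp only [map_sum, choiMatrix, Matrix.of_apply, ← map_smul, Matrix.smul_single, smul_eq_mul,
    mul_one]

variable {R A n : Type*} [CommSemiring R] [Semiring A] [StarRing A] [Algebra R A] [Fintype n]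
  [DecidableEq n]

lemma apply_eq_sum_of_choiMatrix_eq {L : Type*} [Fintype L]
    {φ : Matrix n n R →ₗ[R] A} {W : Matrix L n A} (hW : choiMatrix φ = Wᴴ * W)
    (M : Matrix n n R) :
    φ M = ∑ i, ∑ j, ∑ l, M i j • (star (W l i) * W l j) := by
  simp only [φ.apply_eq_sum_smul_choiMatrix, hW, Matrix.mul_apply, Matrix.conjTranspose_apply,
    Finset.smul_sum]

lemma map_eq_conjTranspose_mul_self_of_choiMatrix_eq [StarRing R] [StarModule R A]
    {k L P : Type*} [Fintype L] [Fintype P] {φ : Matrix n n R →ₗ[R] A} {W : Matrix L n A}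
    (hW : choiMatrix φ = Wᴴ * W)
    {X : Matrix k k (Matrix n n R)} {S : Matrix P (k × n) R}
    (hS : Matrix.comp k k n n R X = Sᴴ * S) :
    X.map φ = (Matrix.of fun (q : P × L) t => ∑ j, S q.1 (t, j) • W q.2 j)ᴴ *
      Matrix.of fun (q : P × L) t => ∑ j, S q.1 (t, j) • W q.2 j := by
  ext s t
  have hX : ∀ i j, X s t i j = ∑ p, star (S p (s, i)) * S p (t, j) := fun i j => by
    simpa [Matrix.mul_apply] using congr_arg (fun M => M (s, i) (t, j)) hS
  simp only [Matrix.map_apply, φ.apply_eq_sum_of_choiMatrix_eq hW, hX, Matrix.mul_apply,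
    Matrix.conjTranspose_apply, Matrix.of_apply, star_sum, star_smul, Finset.sum_mul_sum,
    smul_mul_smul_comm, Finset.sum_smul, Fintype.sum_prod_type]
  simp only [Finset.sum_comm (γ := L) (α := P), Finset.sum_comm (γ := n) (α := P),
    Finset.sum_comm (γ := n) (α := L)]

end LinearMap

/-- **Choi's theorem.** A linear map `φ : M_n(ℂ) → A` into a C*-algebra
`A` is completely positive iff its Choi matrix `(φ(Eᵢⱼ))ᵢⱼ ∈ M_n(A)` is positive.
Positivity in `M_k(A)` is expressed by the C*-characterization `M = Yᴴ * Y`; positivity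
in `M_k(M_n(ℂ))` by positive semidefiniteness of the flattened matrix. -/
theorem choi_theorem
    {n : ℕ} {A : Type*} [NormedRing A] [StarRing A] [CStarRing A]
    [NormedAlgebra ℂ A] [StarModule ℂ A] [CompleteSpace A]
    (φ : Matrix (Fin n) (Fin n) ℂ →ₗ[ℂ] A) :
    (∀ (k : ℕ) (X : Matrix (Fin k) (Fin k) (Matrix (Fin n) (Fin n) ℂ)),
        (Matrix.of fun (p q : Fin k × Fin n) => X p.1 q.1 p.2 q.2).PosSemidef →
        ∃ Y : Matrix (Fin k) (Fin k) A, X.map φ = Yᴴ * Y) ↔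
      ∃ Y : Matrix (Fin n) (Fin n) A,
        (Matrix.of fun i j => φ (Matrix.single i j 1)) = Yᴴ * Y := by
  let _ : CStarAlgebra A := {}
  let _ := CStarAlgebra.spectralOrder A
  have := CStarAlgebra.spectralOrderedRing A
  constructor
  · intro hφ
    exact hφ n _ Matrix.posSemidef_comp_single_one
  · rintro ⟨W, hW⟩ k X hX
    obtain ⟨S, hS⟩ := hX.exists_eq_conjTranspose_mul_self
    rw [φ.map_eq_conjTranspose_mul_self_of_choiMatrix_eq hW hS]
    exact Matrix.exists_conjTranspose_mul_self_eq _
end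

section
/- Let A₀, A₁, …, Aₙ, B ∈ M_p(ℂ) and suppose the block matrix in M_{n+1}(M_p(ℂ)) with (0,0) block A₀ + B, (i,i) block A₀ − B for 1 ≤ i ≤ n, (0,i) block 2Aᵢ*, and (i,0) block 2Aᵢ is positive semidefinite. Let S₁,…,Sₙ be Cuntz isometries on H. Then A₀ ⊗ I + Σᵢ₌₁ⁿ Aᵢ ⊗ Sᵢ + Σᵢ₌₁ⁿ Aᵢ* ⊗ Sᵢ* is positive in M_p(B(H)). -/
/-!
Positivity of the block matrix `M` says that `∑ M x y ⟪u x, u y⟫ ≥ 0` for every family of vectors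
`u` (Schur product of `M` with the Gram matrix of `u`). Take `u = (v, S₁* v, …, Sₙ* v)`: the
off-diagonal blocks produce the terms `Aᵢ ⊗ Sᵢ` and `Aᵢ* ⊗ Sᵢ*`, while the diagonal blocks
`A₀ - B` contribute `∑ᵢ ⟪Sᵢ* v a, Sᵢ* v b⟫ = ⟪v a, v b⟫` by the Cuntz relation `∑ᵢ Sᵢ Sᵢ* = 1`,
which combines with the corner block `A₀ + B` to `2 A₀`. The form therefore equals twice the
quadratic form of `A₀ ⊗ I + ∑ Aᵢ ⊗ Sᵢ + ∑ Aᵢ* ⊗ Sᵢ*` at `v`.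
-/

open scoped ComplexOrder Matrix InnerProductSpace
open ContinuousLinearMap

theorem Matrix.PosSemidef.sum_mul_inner_nonneg {𝕜 H ι : Type*} [RCLike 𝕜]
    [NormedAddCommGroup H] [InnerProductSpace 𝕜 H] [Fintype ι]
    {M : Matrix ι ι 𝕜} (hM : M.PosSemidef) (u : ι → H) :
    0 ≤ ∑ x, ∑ y, M x y * ⟪u x, u y⟫_𝕜 := by
  simpa [dotProduct, Matrix.mulVec, Matrix.hadamard_apply, Matrix.gram_apply]
    using (hM.hadamard (Matrix.posSemidef_gram 𝕜 u)).dotProduct_mulVec_nonneg 1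

section Cuntz

variable {𝕜 H ι : Type*} [RCLike 𝕜] [NormedAddCommGroup H] [InnerProductSpace 𝕜 H]
  [CompleteSpace H] [Fintype ι] {n : ℕ}

def cuntzBlockMatrix (A0 B : Matrix ι ι 𝕜) (A : Fin n → Matrix ι ι 𝕜) :
    Matrix (Fin (n+1) × ι) (Fin (n+1) × ι) 𝕜 :=
  Matrix.of fun (x y : Fin (n+1) × ι) =>
    (if x.1 = 0 then
      (if y.1 = 0 then A0 + B else (2 : 𝕜) • ((Fin.cons 0 A : Fin (n+1) → _) y.1)ᴴ)
     else if y.1 = 0 then (2 : 𝕜) • (Fin.cons 0 A : Fin (n+1) → _) x.1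
     else if x.1 = y.1 then A0 - B
     else 0) x.2 y.2

noncomputable def cuntzElement (A0 : Matrix ι ι 𝕜) (A : Fin n → Matrix ι ι 𝕜)
    (S : Fin n → H →L[𝕜] H) : Matrix ι ι (H →L[𝕜] H) :=
  Matrix.of fun a b =>
    A0 a b • 1 + ∑ i, A i a b • S i + ∑ i, (starRingEnd 𝕜) (A i b a) • adjoint (S i)

/-- `R v` for the column `R = (I, S₁*, …, Sₙ*)` of the paper, without its factor `1/√2`; hence the
`2` in `sum_cuntzBlockMatrix_mul_inner_cuntzLift`. -/
noncomputable def cuntzLift (S : Fin n → H →L[𝕜] H) (v : ι → H) : Fin (n+1) × ι → H :=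
  fun x => (Fin.cons v fun i b => adjoint (S i) (v b) : Fin (n+1) → ι → H) x.1 x.2

theorem sum_cuntzBlockMatrix_mul_inner_cuntzLift (A0 B : Matrix ι ι 𝕜) (A : Fin n → Matrix ι ι 𝕜)
    {S : Fin n → H →L[𝕜] H} (hS : ∑ i, S i ∘L adjoint (S i) = 1) (v : ι → H) :
    ∑ x, ∑ y, cuntzBlockMatrix A0 B A x y * ⟪cuntzLift S v x, cuntzLift S v y⟫_𝕜 =
      2 * ∑ a, ∑ b, ⟪v a, cuntzElement A0 A S a b (v b)⟫_𝕜 := by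
  simp only [Fintype.sum_prod_type_right, Finset.mul_sum]
  refine Finset.sum_congr rfl fun a _ =>
    Finset.sum_comm.trans <| Finset.sum_congr rfl fun b _ => ?_
  simp only [Fin.sum_univ_succ, cuntzBlockMatrix, cuntzLift, cuntzElement, Matrix.of_apply,
    Fin.cons_zero, Fin.cons_succ, Fin.succ_ne_zero, Fin.succ_inj, if_true, if_false,
    Matrix.add_apply, Matrix.sub_apply, Matrix.smul_apply, Matrix.conjTranspose_apply,
    apply_ite (fun M : Matrix ι ι 𝕜 => M a b), Matrix.zero_apply, ite_mul, zero_mul,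
    Finset.sum_ite_eq, Finset.mem_univ, smul_eq_mul, adjoint_inner_left, Finset.sum_add_distrib,
    ← Finset.mul_sum, mul_assoc, RCLike.star_def]
  rw [← inner_sum, show ∑ i, S i (adjoint (S i) (v b)) = v b by simpa using congr($hS (v b))]
  simp only [add_apply, smul_apply, one_apply_eq_self, sum_apply, inner_add_right, inner_sum,
    inner_smul_right]
  ring

end Cuntz

theorem block_positivity_implies_positive_in_MpSn_general
    {H : Type*} [NormedAddCommGroup H] [InnerProductSpace ℂ H] [CompleteSpace H]
    {n p : ℕ} (A0 B : Matrix (Fin p) (Fin p) ℂ) (A : Fin n → Matrix (Fin p) (Fin p) ℂ)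
    (hblock : (Matrix.of fun (x y : Fin (n+1) × Fin p) =>
      (if x.1 = 0 then
        (if y.1 = 0 then A0 + B else (2 : ℂ) • ((Fin.cons 0 A : Fin (n+1) → _) y.1)ᴴ)
       else if y.1 = 0 then (2 : ℂ) • (Fin.cons 0 A : Fin (n+1) → _) x.1
       else if x.1 = y.1 then A0 - B
       else 0) x.2 y.2).PosSemidef)
    (S : Fin n → H →L[ℂ] H)
    (hsum : ∑ i, S i ∘L ContinuousLinearMap.adjoint (S i) = 1) :
    ∀ v : Fin p → H,
      0 ≤ ∑ a, ∑ b,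
        (inner ℂ
          ((A0 a b • (1 : H →L[ℂ] H)
            + ∑ i, A i a b • S i
            + ∑ i, (starRingEnd ℂ) (A i b a) • ContinuousLinearMap.adjoint (S i))
          (v b)) (v a) : ℂ) := by
  intro v
  have hM : (cuntzBlockMatrix A0 B A).PosSemidef := hblock
  have hform := hM.sum_mul_inner_nonneg (cuntzLift S v)
  rw [sum_cuntzBlockMatrix_mul_inner_cuntzLift A0 B A hsum v] at hform
  have hquad : 0 ≤ ∑ a, ∑ b, ⟪v a, cuntzElement A0 A S a b (v b)⟫_ℂ := by
    simpa using mul_nonneg (inv_nonneg.2 zero_le_two) hform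
  rw [← star_nonneg_iff] at hquad
  simp only [star_sum, RCLike.star_def, inner_conj_symm] at hquad
  exact hquad

/-- Let `A₀, A₁, …, Aₙ, B ∈ M_p(ℂ)` and suppose the block matrix in
`M_{n+1}(M_p(ℂ))` with `(0,0)` block `A₀ + B`, `(i,i)` block `A₀ − B`, `(0,i)` block
`2Aᵢ*`, `(i,0)` block `2Aᵢ` is positive semidefinite. Then for Cuntz isometries
`S₁,…,Sₙ` on `H`, the element `A₀ ⊗ I + Σᵢ Aᵢ ⊗ Sᵢ + Σᵢ Aᵢ* ⊗ Sᵢ*` is positive in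
`M_p(B(H))` (positivity via the quadratic form in the complex order). -/
theorem block_positivity_implies_positive_in_MpSn
    {H : Type*} [NormedAddCommGroup H] [InnerProductSpace ℂ H] [CompleteSpace H]
    {n p : ℕ} (A0 B : Matrix (Fin p) (Fin p) ℂ) (A : Fin n → Matrix (Fin p) (Fin p) ℂ)
    (hblock : (Matrix.of fun (x y : Fin (n+1) × Fin p) =>
      (if x.1 = 0 then
        (if y.1 = 0 then A0 + B else (2 : ℂ) • ((Fin.cons 0 A : Fin (n+1) → _) y.1)ᴴ)
       else if y.1 = 0 then (2 : ℂ) • (Fin.cons 0 A : Fin (n+1) → _) x.1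
       else if x.1 = y.1 then A0 - B
       else 0) x.2 y.2).PosSemidef)
    (S : Fin n → H →L[ℂ] H)
    (hiso : ∀ i, (ContinuousLinearMap.adjoint (S i)) ∘L S i = 1)
    (hsum : ∑ i, S i ∘L ContinuousLinearMap.adjoint (S i) = 1) :
    ∀ v : Fin p → H,
      0 ≤ ∑ a, ∑ b,
        (inner ℂ
          ((A0 a b • (1 : H →L[ℂ] H)
            + ∑ i, A i a b • S i
            + ∑ i, (starRingEnd ℂ) (A i b a) • ContinuousLinearMap.adjoint (S i))
          (v b)) (v a) : ℂ) :=
  block_positivity_implies_positive_in_MpSn_general A0 B A hblock S hsum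
end

section
/- Let J be a finite-dimensional self-adjoint subspace of an operator system S containing no positive elements other than 0, and suppose J is a kernel (J = ker φ for some unital completely positive φ). Then J is completely order proximinal: for every n and every (xᵢⱼ + J) in the quotient cone C_n of M_n(S/J), there exist kᵢⱼ ∈ J with (xᵢⱼ + kᵢⱼ) ∈ M_n(S)⁺. -/
/-!
If `K` is a closed cone and `L` a finite-dimensional subspace with `K ∩ L = {0}`, then by
compactness of the unit sphere of `L` there is `δ > 0` with `δ ‖l‖ ≤ ‖p + l‖` for `p ∈ K`,
`l ∈ L`, so `K + L` is closed. Apply this to the positive cone of `M_m(A)` and `L = M_m(J)`: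
if `Yᴴ Y` has entries in `J`, its diagonal entries `∑ₚ star (Y p i) * Y p i` are positive
elements of `J`, hence zero, hence `Y = 0`. The hypothesis puts `x + ε 1` in
`M_m(A)⁺ + M_m(J)` for every `ε > 0`, so `x` lies in this closed set as well.
-/

open Filter Topology Metric
open scoped Matrix Pointwise

section ClosedCone

variable {E : Type*} [NormedAddCommGroup E] [NormedSpace ℝ E] {K : Set E} {L : Submodule ℝ E}

theorem exists_pos_mul_norm_le_norm_add (hK : IsClosed K)
    (hsmul : ∀ r : ℝ, 0 < r → ∀ x ∈ K, r • x ∈ K) [FiniteDimensional ℝ L]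
    (hKL : ∀ x ∈ L, x ∈ K → x = 0) :
    ∃ δ > 0, ∀ p ∈ K, ∀ l ∈ L, δ * ‖l‖ ≤ ‖p + l‖ := by
  rcases K.eq_empty_or_nonempty with rfl | hKne
  · exact ⟨1, one_pos, by simp⟩
  obtain ⟨δ, hδ, hδK⟩ : ∃ δ, 0 < δ ∧ ∀ u ∈ sphere (0 : L) 1, δ ≤ infDist (-(u : E)) K := by
    refine (isCompact_sphere (0 : L) 1).exists_forall_le' (by fun_prop) fun u hu => ?_
    refine (hK.notMem_iff_infDist_pos hKne).1 fun hu' => ?_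
    have : -(u : E) = 0 := hKL _ (L.neg_mem u.2) hu'
    simp_all
  refine ⟨δ, hδ, fun p hp l hl => ?_⟩
  rcases eq_or_ne l 0 with rfl | hl0
  · simp
  have hlpos : 0 < ‖l‖ := norm_pos_iff.2 hl0
  have hδl : δ ≤ infDist (-(‖l‖⁻¹ • l)) K := by
    refine hδK ⟨‖l‖⁻¹ • l, L.smul_mem _ hl⟩ ?_
    rw [mem_sphere_zero_iff_norm]
    show ‖‖l‖⁻¹ • l‖ = 1
    rw [norm_smul, norm_inv, norm_norm, inv_mul_cancel₀ hlpos.ne']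
  calc δ * ‖l‖ ≤ infDist (-(‖l‖⁻¹ • l)) K * ‖l‖ := by gcongr
    _ ≤ dist (-(‖l‖⁻¹ • l)) (‖l‖⁻¹ • p) * ‖l‖ := by
      gcongr; exact infDist_le_dist_of_mem (hsmul _ (inv_pos.2 hlpos) p hp)
    _ = ‖p + l‖ := by
      rw [dist_eq_norm, ← neg_add', ← smul_add, norm_neg, norm_smul, norm_inv, norm_norm,
        add_comm]
      field_simp

theorem IsClosed.add_finiteDimensional_submodule (hK : IsClosed K)
    (hsmul : ∀ r : ℝ, 0 < r → ∀ x ∈ K, r • x ∈ K) [FiniteDimensional ℝ L]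
    (hKL : ∀ x ∈ L, x ∈ K → x = 0) :
    IsClosed (K + (L : Set E)) := by
  obtain ⟨δ, hδ, hδKL⟩ := exists_pos_mul_norm_le_norm_add hK hsmul hKL
  refine isClosed_of_closure_subset fun z hz => ?_
  obtain ⟨w, hw, hwz⟩ := mem_closure_iff_seq_limit.1 hz
  choose p hp l hl hpl using hw
  obtain ⟨R, hR⟩ := hwz.norm.bddAbove_range
  have hlR : ∀ n, (⟨l n, hl n⟩ : L) ∈ closedBall 0 (R / δ) := fun n => by
    rw [mem_closedBall_zero_iff, le_div_iff₀' hδ]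
    calc δ * ‖l n‖ ≤ ‖w n‖ := hpl n ▸ hδKL _ (hp n) _ (hl n)
      _ ≤ R := hR ⟨n, rfl⟩
  obtain ⟨a, -, φ, hφ, hla⟩ := (isCompact_closedBall (0 : L) (R / δ)).tendsto_subseq hlR
  have hpa : Tendsto (p ∘ φ) atTop (𝓝 (z - a)) := by
    refine ((hwz.comp hφ.tendsto_atTop).sub ((continuous_subtype_val.tendsto a).comp hla)).congr
      fun n => ?_
    simp [← hpl]
  exact ⟨z - a, hK.mem_of_tendsto hpa (Eventually.of_forall fun n => hp _), a, a.2,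
    sub_add_cancel z a⟩

end ClosedCone

theorem Submodule.finite_matrix {R M m n : Type*} [Semiring R] [AddCommMonoid M] [Module R M]
    [Finite m] [Finite n] (S : Submodule R M) [Module.Finite R S] :
    Module.Finite R (S.matrix : Submodule R (Matrix m n M)) := by
  have hrange :
      S.matrix = LinearMap.range (S.subtype.mapMatrix : Matrix m n S →ₗ[R] Matrix m n M) := by
    ext x
    refine ⟨fun hx => ⟨.of fun i j => ⟨x i j, hx i j⟩, rfl⟩, ?_⟩
    rintro ⟨y, rfl⟩ i j
    exact (y i j).2
  have : Module.Finite R (Matrix m n S) := inferInstanceAs (Module.Finite R (m → n → S))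
  rw [hrange]
  exact Module.Finite.range _

theorem CStarAlgebra.isClosed_setOf_eq_star_mul_self {B : Type*} [CStarAlgebra B] :
    IsClosed {b : B | ∃ c, b = star c * c} := by
  let _ := CStarAlgebra.spectralOrder B
  have := CStarAlgebra.spectralOrderedRing B
  simpa only [← CStarAlgebra.nonneg_iff_eq_star_mul_self] using CStarAlgebra.isClosed_nonneg

namespace Matrix

variable {A : Type*} [CStarAlgebra A] {m n : Type*}

theorem isClosed_setOf_eq_conjTranspose_mul_self [Fintype n] [DecidableEq n] :
    IsClosed {x : Matrix n n A | ∃ Y : Matrix n n A, x = Yᴴ * Y} := by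
  let _ := CStarAlgebra.spectralOrder A
  have := CStarAlgebra.spectralOrderedRing A
  exact (CStarAlgebra.isClosed_setOf_eq_star_mul_self (B := CStarMatrix n n A)).preimage
    CStarMatrix.ofMatrixL.continuous

theorem eq_zero_of_conjTranspose_mul_self_mem_matrix [Fintype m] {S : Set A}
    (hS : ∀ a ∈ S, (∃ b, a = star b * b) → a = 0) {Y : Matrix m n A}
    (hY : Yᴴ * Y ∈ S.matrix) : Y = 0 := by
  let _ := CStarAlgebra.spectralOrder A
  have := CStarAlgebra.spectralOrderedRing A
  ext q i
  have hdiag : (Yᴴ * Y) i i = ∑ p, star (Y p i) * Y p i := by simp [mul_apply]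
  have hnonneg : ∀ p ∈ Finset.univ, 0 ≤ star (Y p i) * Y p i :=
    fun p _ => star_mul_self_nonneg _
  have hzero : (Yᴴ * Y) i i = 0 := hS _ (hY i i) <|
    CStarAlgebra.nonneg_iff_eq_star_mul_self.1 (hdiag ▸ Finset.sum_nonneg hnonneg)
  rw [hdiag, Finset.sum_eq_zero_iff_of_nonneg hnonneg] at hzero
  exact (CStarRing.star_mul_self_eq_zero_iff _).1 (hzero q (Finset.mem_univ q))

theorem isClosed_setOf_eq_conjTranspose_mul_self_add_matrix [Fintype n] [DecidableEq n]
    (J : Submodule ℂ A) [FiniteDimensional ℂ J]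
    (hJ : ∀ a ∈ J, (∃ b, a = star b * b) → a = 0) :
    IsClosed ({x : Matrix n n A | ∃ Y : Matrix n n A, x = Yᴴ * Y} +
      ((J.matrix : Submodule ℂ (Matrix n n A)) : Set (Matrix n n A))) := by
  -- the sup norm, which induces the product topology
  let _ := Matrix.normedAddCommGroup (m := n) (n := n) (α := A)
  let _ := Matrix.normedSpace (m := n) (n := n) (α := A) (R := ℝ)
  let L := (J.matrix : Submodule ℂ (Matrix n n A)).restrictScalars ℝ
  have : Module.Finite ℂ L := J.finite_matrix
  have : FiniteDimensional ℝ L := Module.Finite.trans ℂ _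
  refine isClosed_setOf_eq_conjTranspose_mul_self.add_finiteDimensional_submodule (L := L)
    ?_ ?_
  · rintro r hr _ ⟨Y, rfl⟩
    refine ⟨√r • Y, ?_⟩
    rw [conjTranspose_smul, star_trivial, smul_mul_smul_comm, Real.mul_self_sqrt hr.le]
  · rintro _ hx ⟨Y, rfl⟩
    rw [eq_zero_of_conjTranspose_mul_self_mem_matrix hJ hx, Matrix.mul_zero]

end Matrix

theorem finite_dimensional_kernel_completely_order_proximinal_general
    {A : Type*} [NormedRing A] [StarRing A] [CStarRing A]
    [NormedAlgebra ℂ A] [StarModule ℂ A] [CompleteSpace A]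
    (S J : Submodule ℂ A)
    (hJfin : FiniteDimensional ℂ J)
    (hJpos : ∀ x ∈ J, (∃ y : A, x = star y * y) → x = 0) :
    ∀ (m : ℕ) (x : Matrix (Fin m) (Fin m) A), (∀ i j, x i j ∈ S) →
      (∀ ε : ℝ, 0 < ε → ∃ k : Matrix (Fin m) (Fin m) A,
        (∀ i j, k i j ∈ J) ∧
        ∃ Y : Matrix (Fin m) (Fin m) A, (ε : ℂ) • (1 : Matrix (Fin m) (Fin m) A) + (x + k) = Yᴴ * Y) →
      ∃ k : Matrix (Fin m) (Fin m) A,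
        (∀ i j, k i j ∈ J) ∧ ∃ Y : Matrix (Fin m) (Fin m) A, x + k = Yᴴ * Y := by
  intro m x _ hx
  let _ : CStarAlgebra A := { ‹NormedRing A›, ‹StarRing A›, ‹CStarRing A›, ‹NormedAlgebra ℂ A›,
    ‹StarModule ℂ A›, ‹CompleteSpace A› with }
  have hclosed := Matrix.isClosed_setOf_eq_conjTranspose_mul_self_add_matrix (n := Fin m) J hJpos
  have hlim : Tendsto (fun ε : ℝ => x + (ε : ℂ) • 1) (𝓝[>] 0) (𝓝 x) := by
    have : Continuous fun ε : ℝ => x + (ε : ℂ) • (1 : Matrix (Fin m) (Fin m) A) := by fun_prop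
    simpa using (this.tendsto 0).mono_left nhdsWithin_le_nhds
  obtain ⟨_, ⟨Y, rfl⟩, l, hl, hYl⟩ := hclosed.closure_subset <| mem_closure_of_tendsto hlim <|
    eventually_nhdsWithin_of_forall fun ε hε => by
      obtain ⟨k, hk, Y, hY⟩ := hx ε hε
      exact ⟨_, ⟨Y, rfl⟩, -k, J.matrix.neg_mem hk, by rw [← hY]; beta_reduce; abel⟩
  exact ⟨-l, fun i j => J.neg_mem (hl i j), Y, by rw [← hYl, add_neg_cancel_right]⟩

/-- Let `S` be a (concrete) operator system in a unital C*-algebra `A`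
and let `J ⊆ S` be a finite-dimensional self-adjoint subspace containing no positive
elements other than `0` which is a kernel: `J = ker φ` for a unital completely positive
map `φ : S → B` into a C*-algebra `B`. Then `J` is completely order proximinal: whenever
`(xᵢⱼ + J)` lies in the quotient cone `C_m` (for every `ε > 0` there are `kᵢⱼ ∈ J` with
`ε·1 ⊗ I_m + (xᵢⱼ + kᵢⱼ) ≥ 0` in `M_m(A)`), there exist `kᵢⱼ ∈ J` with
`(xᵢⱼ + kᵢⱼ) ≥ 0` in `M_m(A)`. Positivity in matrix algebras over a C*-algebra is
expressed by the characterization `x = Yᴴ * Y`. -/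
theorem finite_dimensional_kernel_completely_order_proximinal
    {A : Type*} [NormedRing A] [StarRing A] [CStarRing A]
    [NormedAlgebra ℂ A] [StarModule ℂ A] [CompleteSpace A]
    {B : Type*} [NormedRing B] [StarRing B] [CStarRing B]
    [NormedAlgebra ℂ B] [StarModule ℂ B] [CompleteSpace B]
    (S J : Submodule ℂ A)
    (hS1 : (1 : A) ∈ S) (hSstar : ∀ x ∈ S, star x ∈ S)
    (hJS : J ≤ S) (hJstar : ∀ x ∈ J, star x ∈ J)
    (hJfin : FiniteDimensional ℂ J)
    (hJpos : ∀ x ∈ J, (∃ y : A, x = star y * y) → x = 0)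
    (φ : S →ₗ[ℂ] B)
    (hφ1 : φ ⟨1, hS1⟩ = 1)
    (hφcp : ∀ (m : ℕ) (x : Matrix (Fin m) (Fin m) A) (hx : ∀ i j, x i j ∈ S),
      (∃ Y : Matrix (Fin m) (Fin m) A, x = Yᴴ * Y) →
      ∃ Z : Matrix (Fin m) (Fin m) B,
        (Matrix.of fun i j => φ ⟨x i j, hx i j⟩) = Zᴴ * Z)
    (hker : ∀ (x : A) (hx : x ∈ S), φ ⟨x, hx⟩ = 0 ↔ x ∈ J) :
    ∀ (m : ℕ) (x : Matrix (Fin m) (Fin m) A), (∀ i j, x i j ∈ S) →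
      (∀ ε : ℝ, 0 < ε → ∃ k : Matrix (Fin m) (Fin m) A,
        (∀ i j, k i j ∈ J) ∧
        ∃ Y : Matrix (Fin m) (Fin m) A, (ε : ℂ) • (1 : Matrix (Fin m) (Fin m) A) + (x + k) = Yᴴ * Y) →
      ∃ k : Matrix (Fin m) (Fin m) A,
        (∀ i j, k i j ∈ J) ∧ ∃ Y : Matrix (Fin m) (Fin m) A, x + k = Yᴴ * Y :=
  finite_dimensional_kernel_completely_order_proximinal_general S J hJfin hJpos
end
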